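/- arXiv:math/9807112 — 10 statements merged into one kernel-verified Lean document; each statement's English description precedes it below -/
import Mathlib

section
/- Let M be an R-module and let {N_λ}_{λ∈Λ} be a coindependent family of proper submodules of M (i.e., for every λ and every finite subset J ⊆ Λ\{λ}, N_λ + ⋂_{j∈J} N_j = M). If M satisfies the AB5* condition, then the family is completely coindependent, i.e., for every λ ∈ Λ, N_λ + ⋂_{μ≠λ} N_μ = M. -/
universe u v

section Defs
variable (R : Type u) [Ring R]

/-- A submodule `S` is small (superfluous) in `M`. -/
def IsSmall {M : Type v} [AddCommGroup M] [Module R M] (S : Submodule R M) : Prop :=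
  ∀ K : Submodule R M, S ⊔ K = ⊤ → K = ⊤

/-- The radical: sum of all small submodules. -/
def Rad (M : Type v) [AddCommGroup M] [Module R M] : Submodule R M :=
  sSup {S : Submodule R M | IsSmall R S}

/-- AB5*: the lattice of submodules distributes joins over inverse systems. -/
def AB5Star (M : Type v) [AddCommGroup M] [Module R M] : Prop :=
  ∀ (N : Submodule R M) (s : Set (Submodule R M)), s.Nonempty → DirectedOn (· ≥ ·) s →
    N ⊔ sInf s = ⨅ m ∈ s, (N ⊔ m)

/-- A family of submodules is coindependent. -/
def Coindependent {M : Type v} [AddCommGroup M] [Module R M] {ι : Type w}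
    (N : ι → Submodule R M) : Prop :=
  ∀ l : ι, ∀ J : Finset ι, l ∉ J → N l ⊔ (⨅ j ∈ J, N j) = ⊤

/-- A family of submodules is completely coindependent. -/
def CompletelyCoindependent {M : Type v} [AddCommGroup M] [Module R M] {ι : Type w}
    (N : ι → Submodule R M) : Prop :=
  ∀ l : ι, N l ⊔ (⨅ (μ) (_ : μ ≠ l), N μ) = ⊤

/-- A set of submodules is coindependent. -/
def CoindepSet {M : Type v} [AddCommGroup M] [Module R M] (S : Set (Submodule R M)) : Prop :=
  ∀ N ∈ S, ∀ J : Finset (Submodule R M), ↑J ⊆ S \ {N} → N ⊔ (⨅ P ∈ J, P) = ⊤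

/-- `M` has finite hollow dimension iff every coindependent family of proper submodules is finite. -/
def FinHollowDim (M : Type v) [AddCommGroup M] [Module R M] : Prop :=
  ∀ S : Set (Submodule R M), (∀ N ∈ S, N ≠ ⊤) → CoindepSet R S → S.Finite

/-- `M` has finite uniform dimension iff it has no infinite independent family of
nonzero submodules. -/
def FinUniformDim (M : Type v) [AddCommGroup M] [Module R M] : Prop :=
  ∀ S : Set (Submodule R M), (∀ N ∈ S, N ≠ ⊥) → sSupIndep S → S.Finite

/-- `L` lies above `N` in `M`: any `K` with `L + K = M` satisfies `N + K = M`
(equivalently, `L/N` is small in `M/N`). -/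
def LiesAbove {M : Type v} [AddCommGroup M] [Module R M] (L N : Submodule R M) : Prop :=
  ∀ K : Submodule R M, L ⊔ K = ⊤ → N ⊔ K = ⊤

end Defs

/-- Deviation of the interval `[b, a]` of a preorder is `≤ o` (Gabriel–Rentschler).
The empty deviation (`-1`/`-∞`) corresponds to intervals where chains are constant. -/
def DevLE {L : Type u} [Preorder L] (o : Ordinal.{u}) (a b : L) : Prop :=
  ∀ f : ℕ → L, Antitone f → f 0 ≤ a → (∀ i, b ≤ f i) →
    {i : ℕ | ¬ f i ≤ f (i + 1) ∧
      ¬ ∃ o' : {x : Ordinal.{u} // x < o}, DevLE o'.1 (f i) (f (i + 1))}.Finite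
termination_by o
decreasing_by exact o'.2

/-- `M` has Krull dimension: the deviation of its submodule lattice exists. -/
def HasKrullDim (R : Type u) (M : Type v) [Ring R] [AddCommGroup M] [Module R M] : Prop :=
  ∃ o : Ordinal.{v}, DevLE o (⊤ : Submodule R M) (⊥ : Submodule R M)

/-- The hollow dimension of `M` as a cardinal. -/
noncomputable def hollowDim (R : Type u) (M : Type v) [Ring R] [AddCommGroup M] [Module R M] :
    Cardinal :=
  ⨆ S : {S : Set (Submodule R M) // (∀ N ∈ S, N ≠ ⊤) ∧ CoindepSet R S}, Cardinal.mk S.1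

/-- In a module with AB5*, every coindependent family of proper
submodules is completely coindependent. -/
theorem stmt0 {R : Type u} [Ring R] {M : Type v} [AddCommGroup M] [Module R M]
    (hAB5 : AB5Star R M) {ι : Type w} (N : ι → Submodule R M)
    (hproper : ∀ l, N l ≠ ⊤) (hco : Coindependent R N) :
    CompletelyCoindependent R N := by
  classical
  intro l
  set s : Set (Submodule R M) :=
    {m | ∃ J : Finset ι, l ∉ J ∧ m = ⨅ j ∈ J, N j} with hs
  have hne : s.Nonempty := ⟨⊤, ∅, by simp⟩
  have hdir : DirectedOn (· ≥ ·) s := by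
    rintro _ ⟨J₁, hJ₁, rfl⟩ _ ⟨J₂, hJ₂, rfl⟩
    refine ⟨⨅ j ∈ J₁ ∪ J₂, N j, ⟨J₁ ∪ J₂, by simp [hJ₁, hJ₂], rfl⟩, ?_, ?_⟩ <;>
      exact le_iInf₂ fun j hj => iInf₂_le j (by simp [hj])
  have hinf : sInf s = ⨅ (μ) (_ : μ ≠ l), N μ := by
    apply le_antisymm
    · refine le_iInf₂ fun μ hμ => sInf_le ?_
      exact ⟨{μ}, by simpa using fun h => hμ h.symm, by simp⟩
    · refine le_sInf ?_
      rintro _ ⟨J, hJ, rfl⟩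
      exact le_iInf₂ fun j hj => iInf₂_le j (fun (h : j = l) => hJ (h ▸ hj))
  have := hAB5 (N l) s hne hdir
  rw [hinf] at this
  rw [this]
  refine le_antisymm le_top (le_iInf₂ ?_)
  rintro _ ⟨J, hJ, rfl⟩
  exact (hco l J hJ).ge
end

section
/- Let M be an R-module, {N_λ}_{λ∈Λ} a completely coindependent family of proper submodules of M with |Λ| ≥ 2, and for each λ let L_λ be a submodule with N_λ ⊊ L_λ. Set L := ⋂_λ L_λ and N := ⋂_λ N_λ. Then for every λ ∈ Λ: (1) N_λ + L = L_λ; (2) N_λ ∩ L is a proper submodule of L; (3) (N_λ ∩ L) + ⋂_{μ≠λ} (N_μ ∩ L) = L; hence {(N_λ ∩ L)/N}_Λ is a completely coindependent family of proper submodules of L/N. -/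
universe u v

theorem stmt1 {R : Type u} [Ring R] {M : Type v} [AddCommGroup M] [Module R M]
    {ι : Type w} [Nontrivial ι] (N L : ι → Submodule R M)
    (hproper : ∀ l, N l ≠ ⊤) (hcc : CompletelyCoindependent R N)
    (hNL : ∀ l, N l < L l) :
    (∀ l, N l ⊔ (⨅ μ, L μ) = L l) ∧
    (∀ l, N l ⊓ (⨅ μ, L μ) < ⨅ μ, L μ) ∧
    (∀ l, (N l ⊓ ⨅ μ, L μ) ⊔ (⨅ (μ) (_ : μ ≠ l), (N μ ⊓ ⨅ ν, L ν)) = ⨅ μ, L μ) ∧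
    ((∀ l, (Submodule.comap (⨅ μ, L μ).subtype (N l)).map
        (Submodule.comap (⨅ μ, L μ).subtype (⨅ μ, N μ)).mkQ ≠ ⊤) ∧
      CompletelyCoindependent R (fun l => (Submodule.comap (⨅ μ, L μ).subtype (N l)).map
        (Submodule.comap (⨅ μ, L μ).subtype (⨅ μ, N μ)).mkQ)) := by
  set L' : Submodule R M := ⨅ μ, L μ with hL'def
  have hL'le : ∀ μ, L' ≤ L μ := fun μ => iInf_le _ _
  -- key decomposition
  have key : ∀ l, ∀ x ∈ L', ∃ a b : M, a ∈ N l ∧ a ∈ L' ∧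
      (∀ μ, μ ≠ l → b ∈ N μ) ∧ b ∈ L' ∧ a + b = x := by
    intro l x hx
    have hxt : x ∈ (⊤ : Submodule R M) := trivial
    rw [← hcc l] at hxt
    obtain ⟨a, ha, b, hb, hab⟩ := Submodule.mem_sup.mp hxt
    simp only [Submodule.mem_iInf] at hb
    have hbL' : b ∈ L' := by
      rw [hL'def, Submodule.mem_iInf]
      intro μ
      by_cases h : μ = l
      · subst h
        have hbx : b = x - a := by rw [← hab]; abel
        rw [hbx]
        exact sub_mem (hL'le μ hx) ((hNL μ).le ha)
      · exact (hNL μ).le (hb μ h)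
    have haL' : a ∈ L' := by
      have hax : a = x - b := by rw [← hab]; abel
      rw [hax]; exact sub_mem hx hbL'
    exact ⟨a, b, ha, haL', hb, hbL', hab⟩
  have part1 : ∀ l, N l ⊔ L' = L l := by
    intro l
    apply le_antisymm (sup_le (hNL l).le (hL'le l))
    intro x hx
    have hxt : x ∈ (⊤ : Submodule R M) := trivial
    rw [← hcc l] at hxt
    obtain ⟨a, ha, b, hb, hab⟩ := Submodule.mem_sup.mp hxt
    simp only [Submodule.mem_iInf] at hb
    have hbL' : b ∈ L' := by
      rw [hL'def, Submodule.mem_iInf]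
      intro μ
      by_cases h : μ = l
      · subst h
        have hbx : b = x - a := by rw [← hab]; abel
        rw [hbx]
        exact sub_mem hx ((hNL μ).le ha)
      · exact (hNL μ).le (hb μ h)
    exact Submodule.mem_sup.mpr ⟨a, ha, b, hbL', hab⟩
  have part2 : ∀ l, N l ⊓ L' < L' := by
    intro l
    refine lt_of_le_of_ne inf_le_right (fun h => ?_)
    have hle : L' ≤ N l := by rw [← h]; exact inf_le_left
    have h1 := part1 l
    rw [sup_eq_left.mpr hle] at h1
    exact (hNL l).ne h1
  have part3 : ∀ l, (N l ⊓ L') ⊔ (⨅ (μ) (_ : μ ≠ l), (N μ ⊓ L')) = L' := by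
    intro l
    apply le_antisymm
    · obtain ⟨μ0, hμ0⟩ := exists_ne l
      refine sup_le inf_le_right (le_trans (le_trans (iInf_le _ μ0) (iInf_le _ hμ0)) inf_le_right)
    · intro x hx
      obtain ⟨a, b, ha, haL, hb, hbL, hab⟩ := key l x hx
      refine Submodule.mem_sup.mpr ⟨a, ⟨ha, haL⟩, b, ?_, hab⟩
      simp only [Submodule.mem_iInf, Submodule.mem_inf]
      exact fun μ hμ => ⟨hb μ hμ, hbL⟩
  refine ⟨part1, part2, part3, ?_, ?_⟩
  · intro l h
    have hKle : Submodule.comap L'.subtype (⨅ μ, N μ) ≤ Submodule.comap L'.subtype (N l) :=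
      Submodule.comap_mono (iInf_le _ l)
    have h2 := congrArg (Submodule.comap (Submodule.comap L'.subtype (⨅ μ, N μ)).mkQ) h
    rw [Submodule.comap_map_mkQ, Submodule.comap_top, sup_eq_right.mpr hKle] at h2
    have hle : L' ≤ N l := by
      intro x hx
      exact Submodule.mem_comap.mp (Submodule.eq_top_iff'.mp h2 ⟨x, hx⟩)
    exact (part2 l).ne (inf_eq_right.mpr hle)
  · intro l
    rw [eq_top_iff]
    rintro xq -
    obtain ⟨y, rfl⟩ := Submodule.mkQ_surjective _ xq
    obtain ⟨x, hx⟩ := y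
    obtain ⟨a, b, ha, haL, hb, hbL, hab⟩ := key l x hx
    refine Submodule.mem_sup.mpr
      ⟨(Submodule.comap L'.subtype (⨅ μ, N μ)).mkQ ⟨a, haL⟩,
        Submodule.mem_map_of_mem (Submodule.mem_comap.mpr ha),
        (Submodule.comap L'.subtype (⨅ μ, N μ)).mkQ ⟨b, hbL⟩, ?_, ?_⟩
    · simp only [Submodule.mem_iInf]
      intro μ hμ
      exact Submodule.mem_map_of_mem (Submodule.mem_comap.mpr (hb μ hμ))
    · rw [← map_add]
      exact congrArg _ (Subtype.ext hab)
end

section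
/- Let M be an R-module with property AB5*, and let {L_λ}_{λ∈Λ} be a coindependent family of submodules such that for each λ there is a submodule N_λ ⊆ L_λ with L_λ lying above N_λ in M (i.e., L_λ/N_λ is small in M/N_λ). Then ⋂_λ L_λ lies above ⋂_λ N_λ in M. -/
set_option maxHeartbeats 1000000


universe u v

section AuxLemmas

variable {R : Type u} [Ring R] {M : Type v} [AddCommGroup M] [Module R M]

lemma liesAbove_inf_of_sup_top {l n h : Submodule R M}
    (hla : LiesAbove R l n) (hlh : l ⊔ h = ⊤) :
    LiesAbove R (l ⊓ h) (n ⊓ h) := by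
  intro k hk
  have h1 : (l ⊓ h) ⊔ (h ⊓ k) = h := by
    have h2 : (l ⊓ h ⊔ k) ⊓ h = l ⊓ h ⊔ k ⊓ h :=
      sup_inf_assoc_of_le k inf_le_right
    rw [hk, top_inf_eq, inf_comm k h] at h2
    exact h2.symm
  have h3 : l ⊔ (h ⊓ k) = ⊤ := by
    have h3' : l ⊔ ((l ⊓ h) ⊔ (h ⊓ k)) = ⊤ := by rw [h1]; exact hlh
    rwa [← sup_assoc, sup_inf_self] at h3'
  have h4 : n ⊔ (h ⊓ k) = ⊤ := hla _ h3
  have h5 : (h ⊓ k) ⊔ (n ⊓ h) = h := by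
    have h6 : (h ⊓ k ⊔ n) ⊓ h = h ⊓ k ⊔ n ⊓ h :=
      sup_inf_assoc_of_le n inf_le_left
    rw [sup_comm (h ⊓ k) n, h4, top_inf_eq] at h6
    exact h6.symm
  have h8 : h ≤ (n ⊓ h) ⊔ k :=
    h5.ge.trans (sup_le (inf_le_right.trans le_sup_right) le_sup_left)
  rw [eq_top_iff, ← hk]
  exact sup_le (inf_le_right.trans h8) le_sup_right

lemma stmt2_finset {ι : Type w} (L N : ι → Submodule R M) (hco : Coindependent R L)
    (habove : ∀ l, LiesAbove R (L l) (N l)) (J : Finset ι) :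
    LiesAbove R (⨅ j ∈ J, L j) (⨅ j ∈ J, N j) := by
  classical
  induction J using Finset.induction_on with
  | empty => intro k hk; simpa using hk
  | @insert a J ha ih =>
    rw [Finset.iInf_insert, Finset.iInf_insert]
    have hLJ : L a ⊔ ⨅ j ∈ J, L j = ⊤ := hco a J ha
    have step1 : LiesAbove R (L a ⊓ ⨅ j ∈ J, L j) (N a ⊓ ⨅ j ∈ J, L j) :=
      liesAbove_inf_of_sup_top (habove a) hLJ
    have hNJ : (⨅ j ∈ J, L j) ⊔ N a = ⊤ := by
      rw [sup_comm]; exact habove a _ hLJ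
    have step2 : LiesAbove R ((⨅ j ∈ J, L j) ⊓ N a) ((⨅ j ∈ J, N j) ⊓ N a) :=
      liesAbove_inf_of_sup_top ih hNJ
    intro k hk
    have := step2 k (by rw [inf_comm]; exact step1 k hk)
    rwa [inf_comm] at this

end AuxLemmas

theorem stmt2 {R : Type u} [Ring R] {M : Type v} [AddCommGroup M] [Module R M]
    (hAB5 : AB5Star R M) {ι : Type w} (L N : ι → Submodule R M)
    (hproper : ∀ l, L l ≠ ⊤) (hco : Coindependent R L)
    (hNL : ∀ l, N l ≤ L l) (habove : ∀ l, LiesAbove R (L l) (N l)) :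
    LiesAbove R (⨅ l, L l) (⨅ l, N l) := by
  classical
  intro K hK
  set s : Set (Submodule R M) := Set.range (fun J : Finset ι => ⨅ j ∈ J, N j) with hs
  have hsne : s.Nonempty := ⟨_, ⟨(∅ : Finset ι), rfl⟩⟩
  have hdir : DirectedOn (· ≥ ·) s := by
    rintro _ ⟨J1, rfl⟩ _ ⟨J2, rfl⟩
    refine ⟨_, ⟨J1 ∪ J2, rfl⟩, ?_, ?_⟩
    · exact le_iInf₂ fun j hj => iInf₂_le j (Finset.mem_union_left _ hj)
    · exact le_iInf₂ fun j hj => iInf₂_le j (Finset.mem_union_right _ hj)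
  have hsinf : sInf s = ⨅ l, N l := by
    apply le_antisymm
    · refine le_iInf fun l => ?_
      have h1 : (⨅ j ∈ ({l} : Finset ι), N j) = N l := by simp
      have h2 : (⨅ j ∈ ({l} : Finset ι), N j) ∈ s := ⟨({l} : Finset ι), rfl⟩
      exact (sInf_le h2).trans h1.le
    · exact le_sInf (by rintro _ ⟨J, rfl⟩; exact le_iInf₂ fun j _ => iInf_le _ j)
  have hab := hAB5 K s hsne hdir
  rw [hsinf] at hab
  rw [sup_comm, hab, eq_top_iff]
  refine le_iInf₂ ?_
  rintro _ ⟨J, rfl⟩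
  have hfin := stmt2_finset L N hco habove J
  have hLK : (⨅ j ∈ J, L j) ⊔ K = ⊤ := by
    rw [eq_top_iff, ← hK]
    exact sup_le_sup_right (le_iInf₂ fun j _ => iInf_le _ j) K
  have := hfin K hLK
  rw [sup_comm] at this
  exact this.ge
end

section
/- Let N₁ ⊆ L₁ and N₂ ⊆ L₂ be submodules of M such that L₁ lies above N₁ in M, L₂ lies above N₂ in M, and {L₁, L₂} is coindependent (i.e., L₁ + L₂ = M). Then L₁ ∩ L₂ lies above N₁ ∩ N₂ in M. -/
universe u v

/-- Key step: if `L₁` lies above `N₁` and `L₁ ⊔ L₂ = ⊤`, then `L₁ ⊓ L₂` lies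
above `N₁ ⊓ L₂`. -/
lemma liesAbove_inf_left {R : Type u} [Ring R] {M : Type v} [AddCommGroup M] [Module R M]
    (N₁ L₁ L₂ : Submodule R M) (ha₁ : LiesAbove R L₁ N₁) (hco : L₁ ⊔ L₂ = ⊤) :
    LiesAbove R (L₁ ⊓ L₂) (N₁ ⊓ L₂) := by
  intro K hK
  have h1 : L₂ = (L₁ ⊓ L₂) ⊔ (K ⊓ L₂) := by
    have := sup_inf_assoc_of_le K (inf_le_right : L₁ ⊓ L₂ ≤ L₂)
    rw [hK, top_inf_eq] at this
    exact this
  have h2 : L₁ ⊔ (K ⊓ L₂) = ⊤ := by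
    rw [← top_le_iff, ← hco]
    apply sup_le le_sup_left
    calc L₂ = (L₁ ⊓ L₂) ⊔ (K ⊓ L₂) := h1
      _ ≤ L₁ ⊔ (K ⊓ L₂) := sup_le_sup_right inf_le_left _
  have h3 : N₁ ⊔ (K ⊓ L₂) = ⊤ := ha₁ _ h2
  have h4 : L₂ ≤ (N₁ ⊓ L₂) ⊔ (K ⊓ L₂) := by
    have := sup_inf_assoc_of_le N₁ (inf_le_right : K ⊓ L₂ ≤ L₂)
    rw [sup_comm (K ⊓ L₂) N₁, h3, top_inf_eq] at this
    exact this.le.trans (sup_comm _ _).le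
  have h5 : (L₁ ⊓ L₂) ⊔ K ≤ (N₁ ⊓ L₂) ⊔ K := by
    apply sup_le _ le_sup_right
    calc L₁ ⊓ L₂ ≤ L₂ := inf_le_right
      _ ≤ (N₁ ⊓ L₂) ⊔ (K ⊓ L₂) := h4
      _ ≤ (N₁ ⊓ L₂) ⊔ K := sup_le_sup_left inf_le_left _
  rw [hK] at h5
  exact top_le_iff.mp h5

theorem stmt3 {R : Type u} [Ring R] {M : Type v} [AddCommGroup M] [Module R M]
    (N₁ L₁ N₂ L₂ : Submodule R M) (h₁ : N₁ ≤ L₁) (h₂ : N₂ ≤ L₂)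
    (ha₁ : LiesAbove R L₁ N₁) (ha₂ : LiesAbove R L₂ N₂)
    (hco : L₁ ⊔ L₂ = ⊤) :
    LiesAbove R (L₁ ⊓ L₂) (N₁ ⊓ N₂) := by
  intro K hK
  have hN₁L₂ : N₁ ⊔ L₂ = ⊤ := ha₁ _ hco
  have step1 : (N₁ ⊓ L₂) ⊔ K = ⊤ := liesAbove_inf_left N₁ L₁ L₂ ha₁ hco _ hK
  have step2 : (N₂ ⊓ N₁) ⊔ K = ⊤ := by
    have := liesAbove_inf_left N₂ L₂ N₁ ha₂ (by rw [sup_comm]; exact hN₁L₂) K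
      (by rw [inf_comm]; exact step1)
    exact this
  rw [inf_comm] at step2
  exact step2
end

section
/- Let M be an R-module satisfying AB5* such that every small submodule of M has finite hollow dimension. Then every submodule of Rad(M) has finite hollow dimension. Equivalently, every coindependent family of proper submodules of any submodule G ⊆ Rad(M) is finite. -/
universe u v

section AuxProof
variable {R : Type u} [Ring R] {M : Type v} [AddCommGroup M] [Module R M]


lemma isSmall_mono {A B : Submodule R M} (h : A ≤ B) (hB : IsSmall R B) : IsSmall R A := by
  intro K hK
  exact hB K (top_unique (by rw [← hK]; exact sup_le_sup_right h K))

lemma isSmall_sup {A B : Submodule R M} (hA : IsSmall R A) (hB : IsSmall R B) :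
    IsSmall R (A ⊔ B) := by
  intro K hK
  rw [sup_assoc] at hK
  exact hB K (hA _ hK)

lemma isSmall_bot : IsSmall R (⊥ : Submodule R M) := by
  intro K hK
  rwa [bot_sup_eq] at hK

lemma span_singleton_isSmall {x : M} (hx : x ∈ Rad R M) :
    IsSmall R (Submodule.span R {x}) := by
  have hdir : DirectedOn (· ≤ ·) {S : Submodule R M | IsSmall R S} := by
    intro a ha b hb
    exact ⟨a ⊔ b, by simp only [Set.mem_setOf_eq] at ha hb ⊢; exact isSmall_sup ha hb,
      le_sup_left, le_sup_right⟩
  obtain ⟨y, hy, hxy⟩ := (Submodule.mem_sSup_of_directed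
    ⟨⊥, by simp only [Set.mem_setOf_eq]; exact isSmall_bot⟩ hdir).mp hx
  exact isSmall_mono (by rwa [Submodule.span_le, Set.singleton_subset_iff]) hy

lemma core (hAB5 : AB5Star R M)
    (hsmall : ∀ S : Submodule R M, IsSmall R S → FinHollowDim R S)
    (G : Submodule R M) (hG : G ≤ Rad R M) (N : ℕ → Submodule R M)
    (hle : ∀ i, N i ≤ G) (hne : ∀ i, N i ≠ G)
    (hco : ∀ i : ℕ, ∀ J : Finset ℕ, i ∉ J → N i ⊔ (G ⊓ ⨅ j ∈ J, N j) = G)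
    (hD : IsSmall R (⨅ i, N i)) : False := by
  classical
  have hx : ∀ i : ℕ, ∃ x : M, (∀ J : Finset ℕ, i ∉ J → x ∈ G ⊓ ⨅ j ∈ J, N j) ∧ x ∉ N i := by
    intro i
    set s : Set (Submodule R M) := {m | ∃ J : Finset ℕ, i ∉ J ∧ m = G ⊓ ⨅ j ∈ J, N j} with hs
    have hsne : s.Nonempty := ⟨G ⊓ ⨅ j ∈ (∅ : Finset ℕ), N j, ⟨∅, Finset.notMem_empty i, rfl⟩⟩
    have hmono : ∀ (J J' : Finset ℕ), J ⊆ J' → (⨅ j ∈ J', N j) ≤ ⨅ j ∈ J, N j :=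
      fun J J' h => le_iInf₂ fun j hj => iInf₂_le j (h hj)
    have hsdir : DirectedOn (· ≥ ·) s := by
      rintro m₁ ⟨J₁, hJ₁, rfl⟩ m₂ ⟨J₂, hJ₂, rfl⟩
      refine ⟨G ⊓ ⨅ j ∈ (J₁ ∪ J₂ : Finset ℕ), N j, ⟨J₁ ∪ J₂, by simp [hJ₁, hJ₂], rfl⟩, ?_, ?_⟩
      · exact inf_le_inf_left _ (hmono _ _ Finset.subset_union_left)
      · exact inf_le_inf_left _ (hmono _ _ Finset.subset_union_right)
    have hstop : N i ⊔ sInf s = G := by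
      rw [hAB5 (N i) s hsne hsdir]
      apply le_antisymm
      · calc (⨅ m ∈ s, (N i ⊔ m)) ≤ N i ⊔ (G ⊓ ⨅ j ∈ (∅ : Finset ℕ), N j) :=
              iInf₂_le _ ⟨∅, Finset.notMem_empty i, rfl⟩
          _ = G := hco i ∅ (Finset.notMem_empty i)
      · refine le_iInf₂ ?_
        rintro m ⟨J, hJ, rfl⟩
        exact (hco i J hJ).ge
    have hnle : ¬ sInf s ≤ N i := by
      intro hcon
      refine hne i (le_antisymm (hle i) ?_)
      rw [← hstop]
      exact sup_le le_rfl hcon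
    obtain ⟨z, hz1, hz2⟩ := SetLike.not_le_iff_exists.mp hnle
    exact ⟨z, fun J hJ => (sInf_le ⟨J, hJ, rfl⟩ : sInf s ≤ _) hz1, hz2⟩
  choose x hx1 hx2 using hx
  have hxG : ∀ i, x i ∈ G :=
    fun i => (Submodule.mem_inf.mp (hx1 i ∅ (Finset.notMem_empty i))).1
  have hxN : ∀ i j, j ≠ i → x i ∈ N j := by
    intro i j hji
    have h := hx1 i {j} (by simp only [Finset.mem_singleton]; exact fun e => hji e.symm)
    have h2 := (Submodule.mem_inf.mp h).2
    exact (iInf₂_le j (Finset.mem_singleton_self j) :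
      (⨅ j' ∈ ({j} : Finset ℕ), N j') ≤ N j) h2
  set S₀ : Submodule R M := ⨆ k : ℕ, Submodule.span R {x k} with hS₀def
  have hxS₀ : ∀ k, x k ∈ S₀ := fun k =>
    (le_iSup (fun k => Submodule.span R {x k}) k) (Submodule.mem_span_singleton_self (x k))
  have hspan_small : ∀ k, IsSmall R (Submodule.span R {x k}) :=
    fun k => span_singleton_isSmall (hG (hxG k))
  set F : ℕ → Submodule R M := fun n => ⨆ k : ℕ, ⨆ _ : n ≤ k, Submodule.span R {x k} with hFdef
  have hS₀small : IsSmall R S₀ := by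
    intro K hK
    have hF0 : F 0 = S₀ := by
      apply le_antisymm
      · exact iSup_le fun k => iSup_le fun _ => le_iSup (fun k => Submodule.span R {x k}) k
      · exact iSup_le fun k =>
          le_iSup₂ (f := fun k (_ : (0:ℕ) ≤ k) => Submodule.span R {x k}) k (Nat.zero_le k)
    have hFK : ∀ n, F n ⊔ K = ⊤ := by
      intro n
      induction n with
      | zero => rwa [hF0]
      | succ n ih =>
        have hstep : F n ≤ Submodule.span R {x n} ⊔ F (n + 1) := by
          refine iSup_le fun k => iSup_le fun hk => ?_
          rcases eq_or_lt_of_le hk with rfl | hlt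
          · exact le_sup_left
          · exact le_trans
              (le_iSup₂ (f := fun k (_ : n+1 ≤ k) => Submodule.span R {x k}) k hlt) le_sup_right
        have h3 : Submodule.span R {x n} ⊔ (F (n + 1) ⊔ K) = ⊤ := by
          rw [← sup_assoc]
          exact top_unique (by rw [← ih]; exact sup_le_sup_right hstep K)
        exact hspan_small n _ h3
    have hanti : ∀ m n : ℕ, m ≤ n → F n ≤ F m := fun m n h =>
      iSup_le fun k => iSup_le fun hk =>
        le_iSup₂ (f := fun k (_ : m ≤ k) => Submodule.span R {x k}) k (h.trans hk)
    have hdirF : DirectedOn (· ≥ ·) (Set.range F) := by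
      rintro _ ⟨m, rfl⟩ _ ⟨n, rfl⟩
      exact ⟨F (max m n), ⟨max m n, rfl⟩, hanti _ _ (le_max_left _ _),
        hanti _ _ (le_max_right _ _)⟩
    have h5 := hAB5 K (Set.range F) ⟨F 0, 0, rfl⟩ hdirF
    have htop2 : (⨅ m ∈ Set.range F, (K ⊔ m)) = ⊤ := by
      refine top_unique (le_iInf₂ ?_)
      rintro m ⟨n, rfl⟩
      rw [sup_comm, hFK n]
    have hKD : K ⊔ sInf (Set.range F) = ⊤ := by rw [h5, htop2]
    have hsub : sInf (Set.range F) ≤ ⨅ i, N i := by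
      refine le_iInf fun j => ?_
      refine le_trans (sInf_le ⟨j + 1, rfl⟩) ?_
      refine iSup_le fun k => iSup_le fun hk => ?_
      rw [Submodule.span_le, Set.singleton_subset_iff]
      exact hxN k j (by omega)
    have h6 : (⨅ i, N i) ⊔ K = ⊤ := by
      rw [← top_le_iff, ← hKD]
      exact sup_le le_sup_right (le_trans hsub le_sup_left)
    exact hD K h6
  set L : ℕ → Submodule R ↥S₀ := fun i => Submodule.comap S₀.subtype (N i) with hLdef
  have hxL : ∀ i j : ℕ, i ≠ j → (⟨x i, hxS₀ i⟩ : ↥S₀) ∈ L j :=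
    fun i j h => hxN i j (fun e => h e.symm)
  have hxnL : ∀ i : ℕ, (⟨x i, hxS₀ i⟩ : ↥S₀) ∉ L i := fun i h => hx2 i h
  have hLinj : Function.Injective L := by
    intro i j hij
    by_contra hne'
    exact hxnL i (by rw [hij]; exact hxL i j hne')
  have hLco : ∀ i : ℕ, ∀ J : Finset ℕ, i ∉ J → L i ⊔ ⨅ j ∈ J, L j = ⊤ := by
    intro i J hiJ
    rw [eq_top_iff]
    rintro ⟨y, hy⟩ -
    have hgen : S₀ ≤ Submodule.map S₀.subtype (L i ⊔ ⨅ j ∈ J, L j) := by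
      refine iSup_le fun k => ?_
      rw [Submodule.span_le, Set.singleton_subset_iff]
      by_cases hk : k = i
      · subst hk
        refine ⟨⟨x k, hxS₀ k⟩, Submodule.mem_sup_right ?_, rfl⟩
        simp only [Submodule.mem_iInf]
        intro j hj
        exact hxL k j (fun e => hiJ (e ▸ hj))
      · exact ⟨⟨x k, hxS₀ k⟩, Submodule.mem_sup_left (hxL k i hk), rfl⟩
    obtain ⟨z, hz, hzz⟩ := hgen hy
    have hzy : z = ⟨y, hy⟩ := Subtype.ext hzz
    exact hzy ▸ hz
  have hLprop : ∀ P ∈ Set.range L, P ≠ ⊤ := by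
    rintro _ ⟨i, rfl⟩ h
    exact hxnL i (by rw [h]; trivial)
  have hLcoS : CoindepSet R (Set.range L) := by
    rintro P hP J hJ
    obtain ⟨i, rfl⟩ := hP
    have hidx : ∀ P ∈ J, ∃ j : ℕ, j ≠ i ∧ L j = P := by
      intro P hP'
      obtain ⟨⟨j, rfl⟩, hne'⟩ := hJ hP'
      exact ⟨j, fun e => hne' (by rw [e]; exact rfl), rfl⟩
    choose ι hι1 hι2 using hidx
    set J₀ : Finset ℕ := J.attach.image (fun P => ι P.1 P.2) with hJ₀
    have hiJ₀ : i ∉ J₀ := by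
      simp only [hJ₀, Finset.mem_image, Finset.mem_attach, true_and, Subtype.exists]
      rintro ⟨P, hP', he⟩
      exact hι1 P hP' he
    have h := hLco i J₀ hiJ₀
    rw [← top_le_iff, ← h]
    refine sup_le le_sup_left (le_trans ?_ le_sup_right)
    refine le_iInf₂ fun P hP' => ?_
    have hle' : (⨅ j ∈ J₀, L j) ≤ L (ι P hP') :=
      iInf₂_le _ (Finset.mem_image_of_mem _ (Finset.mem_attach J ⟨P, hP'⟩))
    rwa [hι2 P hP'] at hle'
  have hfin := hsmall S₀ hS₀small (Set.range L) hLprop hLcoS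
  exact (Set.infinite_range_of_injective hLinj) hfin



lemma exists_min (hAB5 : AB5Star R M) (D : Submodule R M) :
    ∃ K₀ : Submodule R M, D ⊔ K₀ = ⊤ ∧ ∀ X, D ⊔ X = ⊤ → X ≤ K₀ → X = K₀ := by
  set s : Set (Submodule R M)ᵒᵈ := {K | D ⊔ (OrderDual.ofDual K) = ⊤} with hs
  have hcond : ∀ c ⊆ s, IsChain (· ≤ ·) c → ∃ ub ∈ s, ∀ z ∈ c, z ≤ ub := by
    intro c hcs hchain
    rcases c.eq_empty_or_nonempty with rfl | ⟨y, hy⟩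
    · refine ⟨OrderDual.toDual ⊤, ?_, fun z hz => absurd hz (Set.notMem_empty z)⟩
      simp only [hs, Set.mem_setOf_eq, OrderDual.ofDual_toDual, sup_top_eq]
    · set c' : Set (Submodule R M) := OrderDual.ofDual '' c with hc'
      have hc'ne : c'.Nonempty := ⟨OrderDual.ofDual y, y, hy, rfl⟩
      have hc'dir : DirectedOn (· ≥ ·) c' := by
        rintro _ ⟨a, ha, rfl⟩ _ ⟨b, hb, rfl⟩
        rcases eq_or_ne a b with rfl | hab
        · exact ⟨OrderDual.ofDual a, ⟨a, ha, rfl⟩, le_rfl, le_rfl⟩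
        · rcases hchain ha hb hab with h | h
          · exact ⟨OrderDual.ofDual b, ⟨b, hb, rfl⟩, h, le_rfl⟩
          · exact ⟨OrderDual.ofDual a, ⟨a, ha, rfl⟩, le_rfl, h⟩
      have h5 := hAB5 D c' hc'ne hc'dir
      have htop : D ⊔ sInf c' = ⊤ := by
        rw [h5]
        refine top_unique (le_iInf₂ ?_)
        rintro m ⟨a, ha, rfl⟩
        exact ge_of_eq (hcs ha)
      refine ⟨OrderDual.toDual (sInf c'), htop, ?_⟩
      intro z hz
      exact (sInf_le ⟨z, hz, rfl⟩ : sInf c' ≤ OrderDual.ofDual z)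
  obtain ⟨m, hm⟩ := zorn_le₀ s hcond
  refine ⟨OrderDual.ofDual m, hm.1, ?_⟩
  intro X hX hXm
  have h2 := hm.2 (show OrderDual.toDual X ∈ s from hX)
    (show m ≤ OrderDual.toDual X from hXm)
  exact le_antisymm hXm h2
lemma no_countable (hAB5 : AB5Star R M)
    (hsmall : ∀ S : Submodule R M, IsSmall R S → FinHollowDim R S)
    (G : Submodule R M) (hG : G ≤ Rad R M) (N : ℕ → Submodule R M)
    (hle : ∀ i, N i ≤ G) (hne : ∀ i, N i ≠ G)
    (hco : ∀ i : ℕ, ∀ J : Finset ℕ, i ∉ J → N i ⊔ (G ⊓ ⨅ j ∈ J, N j) = G) : False := by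
  set D : Submodule R M := ⨅ i, N i with hDdef
  obtain ⟨K₀, hK₀, hK₀min⟩ := exists_min hAB5 D
  have hDG : D ≤ G := (iInf_le N 0).trans (hle 0)
  have hT : IsSmall R (D ⊓ K₀) := by
    intro Y hY
    have hm := sup_inf_assoc_of_le (x := D ⊓ K₀) Y (inf_le_right : D ⊓ K₀ ≤ K₀)
    rw [hY, top_inf_eq] at hm
    have h2 : D ⊔ (Y ⊓ K₀) = ⊤ := by
      rw [← top_le_iff, ← hK₀]
      calc D ⊔ K₀ = D ⊔ ((D ⊓ K₀) ⊔ (Y ⊓ K₀)) := by rw [← hm]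
        _ ≤ D ⊔ (Y ⊓ K₀) :=
            sup_le le_sup_left (sup_le (le_trans inf_le_left le_sup_left) le_sup_right)
    have h3 : Y ⊓ K₀ = K₀ := hK₀min _ h2 inf_le_right
    have h4 : K₀ ≤ Y := by rw [← h3]; exact inf_le_left
    rw [← top_le_iff, ← hY]
    exact sup_le (le_trans inf_le_right h4) le_rfl
  have hmod : ∀ A : Submodule R M, D ≤ A → (A ⊓ K₀) ⊔ D = A := by
    intro A hA
    have hm := sup_inf_assoc_of_le (x := D) K₀ hA
    rw [hK₀, top_inf_eq] at hm
    rw [sup_comm, inf_comm]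
    exact hm.symm
  refine core hAB5 hsmall (G ⊓ K₀) (inf_le_left.trans hG) (fun i => N i ⊓ K₀)
    (fun i => inf_le_inf_right _ (hle i)) ?_ ?_ ?_
  · intro i h
    refine hne i ?_
    have hmi := hmod (N i) (iInf_le N i)
    rw [show N i ⊓ K₀ = G ⊓ K₀ from h] at hmi
    rw [← hmi, hmod G hDG]
  · intro i J hiJ
    set Q : Submodule R M := G ⊓ ⨅ j ∈ J, N j with hQ
    have hQD : D ≤ Q := le_inf hDG (le_iInf₂ fun j _ => iInf_le N j)
    have hNQ : N i ⊔ Q = G := hco i J hiJ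
    set X : Submodule R M := (N i ⊓ K₀) ⊔ (Q ⊓ K₀) with hX
    have hXK : X ≤ K₀ := sup_le inf_le_right inf_le_right
    have hXD : X ⊔ D = G := by
      have h7 : X ⊔ D = ((N i ⊓ K₀) ⊔ D) ⊔ ((Q ⊓ K₀) ⊔ D) := by
        rw [hX, sup_sup_distrib_right]
      rw [h7, hmod (N i) (iInf_le N i), hmod Q hQD, hNQ]
    have hGK : G ⊓ K₀ = X := by
      have hm := sup_inf_assoc_of_le (x := X) D hXK
      rw [hXD] at hm
      rw [hm]
      exact sup_eq_left.mpr (le_trans (inf_le_inf_right K₀ (iInf_le N i)) le_sup_left)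
    apply le_antisymm
    · exact sup_le (inf_le_inf_right _ (hle i)) inf_le_left
    · have hQinf : Q ⊓ K₀ ≤ ⨅ j ∈ J, (N j ⊓ K₀) :=
        le_iInf₂ fun j hj =>
          le_inf (le_trans inf_le_left (le_trans inf_le_right (iInf₂_le j hj))) inf_le_right
      rw [hGK, hX]
      refine sup_le le_sup_left (le_trans (le_inf ?_ hQinf) le_sup_right)
      rw [← hX, ← hGK]
      exact le_inf (le_trans inf_le_left inf_le_left) inf_le_right
  · have h8 : (⨅ i, (N i ⊓ K₀)) = D ⊓ K₀ := by
      rw [hDdef, iInf_inf]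
    rw [h8]
    exact hT

end AuxProof

/-- main theorem. -/
theorem stmt4 {R : Type u} [Ring R] {M : Type v} [AddCommGroup M] [Module R M]
    (hAB5 : AB5Star R M)
    (hsmall : ∀ S : Submodule R M, IsSmall R S → FinHollowDim R S) :
    ∀ G : Submodule R M, G ≤ Rad R M → FinHollowDim R G := by
  classical
  intro G hG Sset hpropS hcoS
  by_contra hfin
  have hinf : Sset.Infinite := hfin
  set f := hinf.natEmbedding with hf
  set N₀ : ℕ → Submodule R ↥G := fun i => (f i : Submodule R ↥G) with hN₀
  have hN₀inj : Function.Injective N₀ := fun i j h => f.injective (Subtype.ext h)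
  have hN₀mem : ∀ i, N₀ i ∈ Sset := fun i => (f i).2
  have hcoN₀ : ∀ i : ℕ, ∀ J : Finset ℕ, i ∉ J → N₀ i ⊔ ⨅ j ∈ J, N₀ j = ⊤ := by
    intro i J hiJ
    have hsub : ↑(J.image N₀) ⊆ Sset \ {N₀ i} := by
      intro P hP
      simp only [Finset.coe_image, Set.mem_image, Finset.mem_coe] at hP
      obtain ⟨j, hj, rfl⟩ := hP
      refine ⟨hN₀mem j, fun h => ?_⟩
      have hji : j = i := hN₀inj (Set.mem_singleton_iff.mp h)
      exact hiJ (hji ▸ hj)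
    have h := hcoS (N₀ i) (hN₀mem i) (J.image N₀) hsub
    have hinfeq : (⨅ P ∈ J.image N₀, P) = ⨅ j ∈ J, N₀ j := by
      apply le_antisymm
      · exact le_iInf₂ fun j hj => iInf₂_le (N₀ j) (Finset.mem_image_of_mem _ hj)
      · refine le_iInf₂ fun P hP => ?_
        obtain ⟨j, hj, rfl⟩ := Finset.mem_image.mp hP
        exact iInf₂_le j hj
    rwa [hinfeq] at h
  set Nt : ℕ → Submodule R M := fun i => Submodule.map G.subtype (N₀ i) with hNt
  refine no_countable hAB5 hsmall G hG Nt (fun i => Submodule.map_subtype_le G (N₀ i)) ?_ ?_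
  · intro i h
    refine hpropS (N₀ i) (hN₀mem i) ?_
    refine Submodule.map_injective_of_injective (Submodule.injective_subtype G) ?_
    rw [Submodule.map_subtype_top]
    exact h
  · intro i J hiJ
    have h := congrArg (Submodule.map G.subtype) (hcoN₀ i J hiJ)
    rw [Submodule.map_sup, Submodule.map_subtype_top] at h
    apply le_antisymm
    · exact sup_le (Submodule.map_subtype_le _ _) inf_le_left
    · refine le_trans h.ge (sup_le le_sup_left (le_trans ?_ le_sup_right))
      refine le_inf (Submodule.map_subtype_le _ _) (le_iInf₂ fun j hj => ?_)
      exact Submodule.map_mono (iInf₂_le j hj)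
end

section
/- Let M be an R-module with property AB5*. Then every submodule of M has finite hollow dimension if and only if every factor module of M has finite uniform dimension. -/
universe u v

section AuxLemmas

open Submodule

variable {R : Type u} [Ring R] {M : Type v} [AddCommGroup M] [Module R M]

theorem aux_map_biInf {M' : Type v} [AddCommGroup M'] [Module R M'] (f : M →ₗ[R] M')
    (hf : Function.Injective f) {ι : Type*} {F : Finset ι} (hF : F.Nonempty)
    (g : ι → Submodule R M) :
    Submodule.map f (⨅ j ∈ F, g j) = ⨅ j ∈ F, Submodule.map f (g j) := by
  haveI : Nonempty (F : Type _) := Finset.nonempty_coe_sort.mpr hF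
  rw [iInf_subtype', iInf_subtype', Submodule.map_iInf f hf]

theorem aux_comap_sup {T a b : Submodule R M} (ha : a ≤ T) (hb : b ≤ T) :
    Submodule.comap T.subtype (a ⊔ b) =
      Submodule.comap T.subtype a ⊔ Submodule.comap T.subtype b := by
  apply Submodule.map_injective_of_injective T.injective_subtype
  rw [Submodule.map_sup, Submodule.map_comap_subtype, Submodule.map_comap_subtype,
    Submodule.map_comap_subtype, inf_eq_right.2 ha, inf_eq_right.2 hb,
    inf_eq_right.2 (sup_le ha hb)]

theorem aux_map_mkQ_inf {Z A B : Submodule R M} (hZ : Z ≤ A) :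
    Submodule.map Z.mkQ (A ⊓ B) = Submodule.map Z.mkQ A ⊓ Submodule.map Z.mkQ B := by
  refine le_antisymm (le_inf (Submodule.map_mono inf_le_left)
    (Submodule.map_mono inf_le_right)) ?_
  intro x hx
  rw [Submodule.mem_inf] at hx
  obtain ⟨a, ha, rfl⟩ := hx.1
  obtain ⟨b, hb, hba⟩ := hx.2
  have hmk : (Submodule.Quotient.mk a : M ⧸ Z) = Submodule.Quotient.mk b := by
    simpa [Submodule.mkQ_apply] using hba.symm
  have hsub : a - b ∈ Z := (Submodule.Quotient.eq Z).mp hmk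
  have hbA : b ∈ A := by
    simpa [sub_sub_cancel] using A.sub_mem ha (hZ hsub)
  exact ⟨b, ⟨hbA, hb⟩, hba⟩

end AuxLemmas

/-- Herbera–Shamsuddin -/
theorem stmt7 {R : Type u} [Ring R] {M : Type v} [AddCommGroup M] [Module R M]
    (hAB5 : AB5Star R M) :
    (∀ N : Submodule R M, FinHollowDim R N) ↔
      (∀ N : Submodule R M, FinUniformDim R (M ⧸ N)) := by
  constructor
  · -- hollow ⇒ uniform (no AB5* needed)
    intro hH N S hne hind
    by_contra hfin
    have hinf : S.Infinite := hfin
    let f := hinf.natEmbedding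
    set fv : ℕ → Submodule R (M ⧸ N) := fun i => (f i : Submodule R (M ⧸ N)) with hfv
    have hfvinj : Function.Injective fv := fun i j h => f.injective (Subtype.ext h)
    have hfvS : ∀ i, fv i ∈ S := fun i => (f i).2
    have hfv0 : ∀ i, fv i ≠ ⊥ := fun i => hne _ (hfvS i)
    set U : ℕ → Submodule R M := fun i => Submodule.comap N.mkQ (fv i) with hU
    have hmapU : ∀ i, Submodule.map N.mkQ (U i) = fv i := fun i =>
      Submodule.map_comap_eq_of_surjective N.mkQ_surjective _
    set H : ℕ → Submodule R M := fun i => ⨆ j, ⨆ _ : j ≠ i, U j with hHdef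
    have hUH : ∀ i j, j ≠ i → U j ≤ H i := fun i j hj =>
      le_iSup₂ (f := fun j (_ : j ≠ i) => U j) j hj
    have hkey : ∀ i, U i ⊓ H i ≤ N := by
      intro i
      have h1 : H i ≤ Submodule.comap N.mkQ (sSup (S \ {fv i})) := by
        refine iSup₂_le fun j hj => Submodule.comap_mono (le_sSup ⟨hfvS j, ?_⟩)
        simp only [Set.mem_singleton_iff]
        exact fun h => hj (hfvinj h)
      have h2 : U i ⊓ H i ≤ Submodule.comap N.mkQ (fv i ⊓ sSup (S \ {fv i})) := by
        rw [Submodule.comap_inf]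
        exact inf_le_inf le_rfl h1
      have h3 : fv i ⊓ sSup (S \ {fv i}) = ⊥ := disjoint_iff.mp (hind (hfvS i))
      rw [h3] at h2
      rwa [Submodule.comap_bot, Submodule.ker_mkQ] at h2
    have hUnotH : ∀ i, ¬ U i ≤ H i := by
      intro i h
      have hUN : U i ≤ N := le_trans (le_inf le_rfl h) (hkey i)
      have hle : fv i ≤ ⊥ := by
        rw [← hmapU i, ← N.mkQ_map_self]
        exact Submodule.map_mono hUN
      exact hfv0 i (le_bot_iff.mp hle)
    set T : Submodule R M := ⨆ j, U j with hT
    have hUT : ∀ i, U i ≤ T := fun i => le_iSup _ i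
    have hHT : ∀ i, H i ≤ T := fun i => iSup₂_le fun j _ => hUT j
    have hsupT : ∀ i, H i ⊔ U i = T := by
      intro i
      refine le_antisymm (sup_le (hHT i) (hUT i)) (iSup_le fun j => ?_)
      by_cases hji : j = i
      · subst hji; exact le_sup_right
      · exact le_trans (hUH i j hji) le_sup_left
    set C : ℕ → Submodule R ↥T := fun i => Submodule.comap T.subtype (H i) with hC
    have hmapC : ∀ i, Submodule.map T.subtype (C i) = H i := by
      intro i
      rw [hC]
      rw [Submodule.map_comap_subtype, inf_eq_right.2 (hHT i)]
    have hHinj : Function.Injective H := by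
      intro i j hij
      by_contra hne'
      have hUle : U j ≤ H i := hUH i j (fun h => hne' h.symm)
      rw [hij] at hUle
      exact hUnotH j hUle
    have hCinj : Function.Injective C := fun i j h =>
      hHinj (by rw [← hmapC i, ← hmapC j, h])
    have hS0inf : (Set.range C).Infinite := Set.infinite_range_of_injective hCinj
    have hproper : ∀ P ∈ Set.range C, P ≠ ⊤ := by
      rintro P ⟨i, rfl⟩ htop
      have hHi : H i = T := by rw [← hmapC i, htop, Submodule.map_subtype_top]
      exact hUnotH i (hHi ▸ hUT i)
    have hcoind : CoindepSet R (Set.range C) := by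
      rintro P ⟨i, rfl⟩ J hJ
      have hinfle : Submodule.comap T.subtype (U i) ≤ ⨅ P' ∈ J, P' := by
        refine le_iInf₂ fun P' hP' => ?_
        obtain ⟨⟨j, rfl⟩, hne'⟩ := hJ hP'
        have hji : j ≠ i := fun h => hne' (by simp [h])
        exact Submodule.comap_mono (hUH j i (Ne.symm hji))
      refine le_antisymm le_top ?_
      calc (⊤ : Submodule R ↥T) = Submodule.comap T.subtype T :=
            (Submodule.comap_subtype_self T).symm
        _ = Submodule.comap T.subtype (H i ⊔ U i) := by rw [hsupT i]
        _ = C i ⊔ Submodule.comap T.subtype (U i) := by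
            rw [aux_comap_sup (hHT i) (hUT i), hC]
        _ ≤ C i ⊔ ⨅ P' ∈ J, P' := sup_le_sup_left hinfle _
    exact hS0inf (hH T _ hproper hcoind)
  · -- uniform ⇒ hollow (uses AB5*)
    intro hUdim N S hprop hco
    by_contra hfin
    have hinf : S.Infinite := hfin
    let f := hinf.natEmbedding
    set g : ℕ → Submodule R ↥N := fun i => (f i : Submodule R ↥N) with hg
    have hginj : Function.Injective g := fun i j h => f.injective (Subtype.ext h)
    have hgS : ∀ i, g i ∈ S := fun i => (f i).2
    have hgtop : ∀ i, g i ≠ ⊤ := fun i => hprop _ (hgS i)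
    set Nv : ℕ → Submodule R M := fun i => Submodule.map N.subtype (g i) with hNv
    have hNvle : ∀ i, Nv i ≤ N := fun i => Submodule.map_subtype_le _ _
    have hNvN : ∀ i, Nv i ≠ N := by
      intro i h
      apply hgtop i
      apply Submodule.map_injective_of_injective N.injective_subtype
      rw [Submodule.map_subtype_top]
      exact h
    have hcoin : ∀ (i : ℕ) (F : Finset ℕ), i ∉ F → F.Nonempty →
        Nv i ⊔ (⨅ j ∈ F, Nv j) = N := by
      intro i F hiF hFne
      classical
      set J : Finset (Submodule R ↥N) := F.image g with hJdef
      have hJ : ↑J ⊆ S \ {g i} := by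
        intro P hP
        rw [hJdef, Finset.coe_image] at hP
        obtain ⟨j, hj, rfl⟩ := hP
        refine ⟨hgS j, ?_⟩
        simp only [Set.mem_singleton_iff]
        intro h
        exact hiF (hginj h ▸ hj)
      have h1 : g i ⊔ (⨅ P ∈ J, P) = ⊤ := hco (g i) (hgS i) J hJ
      have h2 : (⨅ P ∈ J, P) = ⨅ j ∈ F, g j := by
        rw [hJdef]
        exact Finset.iInf_finset_image
      rw [h2] at h1
      have h3 := congrArg (Submodule.map N.subtype) h1
      rwa [Submodule.map_sup, aux_map_biInf N.subtype N.injective_subtype hFne,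
        Submodule.map_subtype_top] at h3
    set K : ℕ → Submodule R M := fun i => ⨅ j, ⨅ _ : j ≠ i, Nv j with hK
    set Z : Submodule R M := ⨅ j, Nv j with hZ
    have hZK : ∀ i, Z ≤ K i := fun i => le_iInf₂ fun j _ => iInf_le _ j
    have hKle : ∀ i j, j ≠ i → K i ≤ Nv j := fun i j hj =>
      iInf₂_le (f := fun j (_ : j ≠ i) => Nv j) j hj
    have hZNv : ∀ j, Z ≤ Nv j := fun j => iInf_le _ j
    have hNK : ∀ i, Nv i ⊔ K i = N := by
      intro i
      classical
      set s : Set (Submodule R M) :=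
        (fun F : Finset ℕ => ⨅ j ∈ F, Nv j) '' {F | F.Nonempty ∧ i ∉ F} with hs
      have hsne : s.Nonempty :=
        ⟨_, ⟨{i + 1}, ⟨Finset.singleton_nonempty _, by simp⟩, rfl⟩⟩
      have hdir : DirectedOn (· ≥ ·) s := by
        rintro x ⟨F₁, ⟨h₁, hi₁⟩, rfl⟩ y ⟨F₂, ⟨h₂, hi₂⟩, rfl⟩
        refine ⟨⨅ j ∈ F₁ ∪ F₂, Nv j, ⟨F₁ ∪ F₂, ⟨?_, ?_⟩, rfl⟩, ?_, ?_⟩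
        · exact h₁.mono Finset.subset_union_left
        · simp only [Set.mem_setOf_eq, Finset.mem_union]
          rintro (h | h)
          · exact hi₁ h
          · exact hi₂ h
        · exact biInf_mono fun j hj => Finset.mem_union_left _ hj
        · exact biInf_mono fun j hj => Finset.mem_union_right _ hj
      have hsInf : sInf s = K i := by
        apply le_antisymm
        · refine le_iInf₂ fun j hj => ?_
          refine sInf_le_of_le ⟨{j}, ⟨Finset.singleton_nonempty _, ?_⟩, rfl⟩ (by simp)
          simp only [Set.mem_setOf_eq, Finset.mem_singleton]
          exact fun h => hj (by rw [h])
        · refine le_sInf ?_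
          rintro m ⟨F, ⟨hFne, hiF⟩, rfl⟩
          exact le_iInf₂ fun j hj => hKle i j (fun h => hiF (h ▸ hj))
      have hAB := hAB5 (Nv i) s hsne hdir
      rw [hsInf] at hAB
      rw [hAB]
      apply le_antisymm
      · obtain ⟨m, hm⟩ := hsne
        have hle : (⨅ m ∈ s, Nv i ⊔ m) ≤ Nv i ⊔ m := biInf_le _ hm
        obtain ⟨F, ⟨hFne, hiF⟩, hmeq⟩ := hm
        rw [show m = ⨅ j ∈ F, Nv j from hmeq.symm, hcoin i F hiF hFne] at hle
        exact hle
      · refine le_iInf₂ ?_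
        rintro m ⟨F, ⟨hFne, hiF⟩, rfl⟩
        rw [hcoin i F hiF hFne]
    have hKnotN : ∀ i, ¬ K i ≤ Nv i := by
      intro i h
      have heq : Nv i = N := by rw [← hNK i, sup_eq_left.mpr h]
      exact hNvN i heq
    set V : ℕ → Submodule R (M ⧸ Z) := fun i => Submodule.map Z.mkQ (K i) with hV
    have hV0 : ∀ i, V i ≠ ⊥ := by
      intro i h
      have h1 : K i ≤ Z := by
        have h2 := Submodule.map_le_iff_le_comap.mp h.le
        rwa [Submodule.comap_bot, Submodule.ker_mkQ] at h2
      exact hKnotN i (le_trans h1 (hZNv i))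
    have hVinj : Function.Injective V := by
      intro i j hij
      by_contra hne'
      have hc := congrArg (Submodule.comap Z.mkQ) hij
      have hc' : Z ⊔ K i = Z ⊔ K j := by
        rwa [show V i = Submodule.map Z.mkQ (K i) from rfl,
          show V j = Submodule.map Z.mkQ (K j) from rfl,
          Submodule.comap_map_mkQ, Submodule.comap_map_mkQ] at hc
      rw [sup_eq_right.mpr (hZK i), sup_eq_right.mpr (hZK j)] at hc'
      have hle : K i ≤ Nv i := by
        rw [hc']
        exact hKle j i hne'
      exact hKnotN i hle
    have hgood : sSupIndep (Set.range V) := by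
      rintro a ⟨i, rfl⟩
      have hle : sSup (Set.range V \ {V i}) ≤ Submodule.map Z.mkQ (Nv i) := by
        refine sSup_le ?_
        rintro W ⟨⟨j, rfl⟩, hW⟩
        have hji : j ≠ i := fun h => hW (by simp [h])
        exact Submodule.map_mono (hKle j i (Ne.symm hji))
      refine Disjoint.mono_right hle ?_
      rw [disjoint_iff]
      have hKNv : K i ⊓ Nv i = Z := by
        apply le_antisymm
        · refine le_iInf fun j => ?_
          by_cases hji : j = i
          · subst hji; exact inf_le_right
          · exact le_trans inf_le_left (hKle i j hji)
        · exact le_inf (hZK i) (hZNv i)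
      calc V i ⊓ Submodule.map Z.mkQ (Nv i)
          = Submodule.map Z.mkQ (K i ⊓ Nv i) := (aux_map_mkQ_inf (hZK i)).symm
        _ = ⊥ := by rw [hKNv, Submodule.mkQ_map_self]
    have hVne : ∀ W ∈ Set.range V, W ≠ ⊥ := by
      rintro W ⟨i, rfl⟩
      exact hV0 i
    have hfinV : (Set.range V).Finite := hUdim Z (Set.range V) hVne hgood
    exact Set.infinite_range_of_injective hVinj hfinV
end

section
/- If every submodule of an R-module M has finite hollow dimension, then every factor module of M has finite uniform dimension. -/
universe u v

theorem stmt8 {R : Type u} [Ring R] {M : Type v} [AddCommGroup M] [Module R M]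
    (h : ∀ N : Submodule R M, FinHollowDim R N) :
    ∀ N : Submodule R M, FinUniformDim R (M ⧸ N) := by
  intro N S hSne hSind
  by_contra hfin
  have hSinf : S.Infinite := hfin
  have e := hSinf.natEmbedding
  set U : ℕ → Submodule R (M ⧸ N) := fun i => (e i : Submodule R (M ⧸ N)) with hU
  have hUinj : Function.Injective U := by
    intro i j hij
    exact e.injective (Subtype.ext hij)
  have hUmem : ∀ i, U i ∈ S := fun i => (e i).2
  have hUne : ∀ i, U i ≠ ⊥ := fun i => hSne _ (hUmem i)
  set W : ℕ → Submodule R (M ⧸ N) := fun k => ⨆ (i) (_ : i ≠ k), U i with hW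
  -- disjointness
  have hdisj : ∀ k, Disjoint (U k) (W k) := by
    intro k
    have h1 : Disjoint (U k) (sSup (S \ {U k})) := hSind (hUmem k)
    refine h1.mono_right ?_
    refine iSup_le fun i => iSup_le fun hik => le_sSup ?_
    exact ⟨hUmem i, fun hiU => hik (hUinj hiU)⟩
  have hUleW : ∀ k, ¬ U k ≤ W k := by
    intro k hle
    exact hUne k ((hdisj k).eq_bot_of_le hle)
  set T : Submodule R (M ⧸ N) := ⨆ i, U i with hT
  have hWleT : ∀ k, W k ≤ T := fun k =>
    iSup_le fun i => iSup_le fun _ => le_iSup U i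
  have hUleT : ∀ k, U k ≤ T := fun k => le_iSup U k
  have hWsupU : ∀ k, W k ⊔ U k = T := by
    intro k
    apply le_antisymm (sup_le (hWleT k) (hUleT k))
    refine iSup_le fun i => ?_
    by_cases hik : i = k
    · subst hik; exact le_sup_right
    · exact le_trans (le_iSup₂ (f := fun i (_ : i ≠ k) => U i) i hik) le_sup_left
  have hUleWj : ∀ k j, k ≠ j → U k ≤ W j := fun k j hkj =>
    le_iSup₂ (f := fun i (_ : i ≠ j) => U i) k hkj
  -- pull back to M
  set P : Submodule R M := Submodule.comap N.mkQ T with hP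
  set V : ℕ → Submodule R P := fun k =>
    Submodule.comap P.subtype (Submodule.comap N.mkQ (W k)) with hV
  set X : ℕ → Submodule R P := fun k =>
    Submodule.comap P.subtype (Submodule.comap N.mkQ (U k)) with hX
  -- key transfer facts
  have hVtop : ∀ k, V k = ⊤ → U k ≤ W k := by
    intro k hk q hq
    obtain ⟨m, hm⟩ := N.mkQ_surjective q
    have hmP : m ∈ P := by simp only [hP, Submodule.mem_comap, hm]; exact hUleT k hq
    have : (⟨m, hmP⟩ : P) ∈ V k := hk ▸ Submodule.mem_top
    simpa [hV, hm] using this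
  have hVne : ∀ k, V k ≠ ⊤ := fun k hk => hUleW k (hVtop k hk)
  have hVinj : Function.Injective V := by
    intro k l hkl
    by_contra hne
    apply hUleW k
    intro q hq
    have hqWl : q ∈ W l := hUleWj k l hne hq
    obtain ⟨m, hm⟩ := N.mkQ_surjective q
    have hmP : m ∈ P := by simp only [hP, Submodule.mem_comap, hm]; exact hUleT k hq
    have h1 : (⟨m, hmP⟩ : P) ∈ V l := by simp [hV, hm, hqWl]
    have h2 : (⟨m, hmP⟩ : P) ∈ V k := hkl ▸ h1
    simpa [hV, hm] using h2
  have hXleV : ∀ k j, k ≠ j → X k ≤ V j := fun k j hkj =>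
    Submodule.comap_mono (Submodule.comap_mono (hUleWj k j hkj))
  have hVX : ∀ l, V l ⊔ X l = ⊤ := by
    intro l
    rw [eq_top_iff]
    rintro ⟨x, hx⟩ -
    have hxT : N.mkQ x ∈ T := hx
    rw [← hWsupU l] at hxT
    obtain ⟨w, hw, u, hu, hwu⟩ := Submodule.mem_sup.mp hxT
    obtain ⟨m, hm⟩ := N.mkQ_surjective w
    have hmP : m ∈ P := by
      simp only [hP, Submodule.mem_comap, hm]; exact hWleT l hw
    have hxmP : x - m ∈ P := sub_mem hx hmP
    refine Submodule.mem_sup.mpr ⟨⟨m, hmP⟩, ?_, ⟨x - m, hxmP⟩, ?_, ?_⟩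
    · simpa [hV, hm] using hw
    · have : N.mkQ (x - m) = u := by
        rw [map_sub, hm, ← hwu]; abel
      simpa [hX, this] using hu
    · ext; simp
  -- apply finite hollow dimension of P
  have hcoind : CoindepSet R (Set.range V) := by
    rintro Q ⟨l, rfl⟩ J hJ
    have hinf : X l ≤ ⨅ P' ∈ J, P' := by
      refine le_iInf₂ fun Q' hQ' => ?_
      obtain ⟨⟨j, rfl⟩, hQne⟩ := hJ hQ'
      refine hXleV l j fun hlj => hQne ?_
      subst hlj; rfl
    rw [eq_top_iff, ← hVX l]
    exact sup_le le_sup_left (le_trans hinf le_sup_right)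
  have hfinV : (Set.range V).Finite :=
    h P (Set.range V) (by rintro Q ⟨l, rfl⟩; exact hVne l) hcoind
  exact (Set.infinite_range_of_injective hVinj) hfinV
end

section
/- If an R-module M has Krull dimension, then M has finite uniform dimension. -/
/-! An infinite independent family `(N i)` of nonzero submodules makes `A ↦ ⨆ i ∈ A, N i` an order
embedding of the power set of an infinite set into the submodule lattice, and order embeddings
reflect deviation. The power set of an infinite set has no deviation: cutting the set into
infinitely many infinite blocks gives a strictly descending chain each of whose factors is again
the power set of an infinite set, so by induction on the ordinal no factor has smaller deviation. -/

universe u v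

theorem DevLE.mono {L : Type u} [Preorder L] {o : Ordinal.{u}} {a a' b b' : L}
    (h : DevLE o a b) (ha : a' ≤ a) (hb : b ≤ b') : DevLE o a' b' := by
  rw [DevLE] at h ⊢
  exact fun f hf h0 hfb => h f hf (h0.trans ha) fun i => hb.trans (hfb i)

theorem DevLE.of_orderEmbedding {α L : Type u} [Preorder α] [Preorder L] (e : α ↪o L)
    {o : Ordinal.{u}} {a b : α} (h : DevLE o (e a) (e b)) : DevLE o a b := by
  induction o using WellFoundedLT.induction generalizing a b with
  | _ o IH =>
  rw [DevLE] at h ⊢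
  intro f hf h0 hfb
  refine (h (e ∘ f) (e.monotone.comp_antitone hf) (e.le_iff_le.mpr h0)
    fun i => e.le_iff_le.mpr (hfb i)).subset ?_
  rintro i ⟨hnle, hdev⟩
  exact ⟨fun hle => hnle (e.le_iff_le.mp hle), fun ⟨o', ho'⟩ => hdev ⟨o', IH o'.1 o'.2 ho'⟩⟩

theorem Set.devLE_univ_sdiff_of_devLE {α : Type u} {s t : Set α} (hts : t ⊆ s)
    {o : Ordinal.{u}} (h : DevLE o s t) : DevLE o (Set.univ : Set ↥(s \ t)) ∅ := by
  let e : Set ↥(s \ t) ↪o Set α :=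
    OrderEmbedding.ofMapLEIff (fun A => t ∪ Subtype.val '' A) fun A B => by
      refine ⟨fun hAB x hx => ?_, fun hAB => Set.union_subset_union_right t (Set.image_mono hAB)⟩
      rcases hAB (Or.inr ⟨x, hx, rfl⟩) with hxt | ⟨y, hy, hyx⟩
      · exact absurd hxt x.2.2
      · exact Subtype.ext hyx ▸ hy
  refine DevLE.of_orderEmbedding e (h.mono ?_ ?_)
  · exact Set.union_subset hts (Set.image_subset_iff.mpr fun x _ => x.2.1)
  · exact Set.subset_union_left

theorem Set.not_devLE_univ_empty {α : Type u} [Infinite α] (o : Ordinal.{u}) :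
    ¬ DevLE o (Set.univ : Set α) ∅ := by
  induction o using WellFoundedLT.induction generalizing α with
  | _ o IH =>
  intro h
  rw [DevLE] at h
  let g : ℕ × ℕ ↪ α := Nat.pairEquiv.toEmbedding.trans (_root_.Infinite.natEmbedding α)
  let T : ℕ → Set α := fun n => g '' {p | n ≤ p.1}
  have hT : Antitone T := fun m n hmn => Set.image_mono fun p hp => hmn.trans hp
  have hgap : ∀ n, (T n \ T (n + 1)).Infinite := fun n => by
    refine Set.infinite_of_injective_forall_mem (f := fun k => g (n, k))
      (fun k l hkl => (Prod.ext_iff.mp (g.injective hkl)).2)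
      fun k => ⟨⟨(n, k), le_refl n, rfl⟩, ?_⟩
    rintro ⟨p, hp, hgp⟩
    rw [g.injective hgp] at hp
    exact Nat.not_succ_le_self n hp
  refine Set.infinite_univ ((h T hT (Set.subset_univ _) fun _ => Set.empty_subset _).subset
    fun n _ => ⟨fun hle => (hgap n).nonempty.ne_empty (Set.sdiff_eq_empty.mpr hle), ?_⟩)
  rintro ⟨o', hdev⟩
  have := (hgap n).to_subtype
  exact IH o'.1 o'.2 (Set.devLE_univ_sdiff_of_devLE (hT n.le_succ) hdev)

def iSupIndep.biSupOrderEmbedding {ι α : Type*} [CompleteLattice α] {t : ι → α}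
    (ht : iSupIndep t) (hne : ∀ i, t i ≠ ⊥) : Set ι ↪o α :=
  OrderEmbedding.ofMapLEIff (fun A => ⨆ i ∈ A, t i) fun A B => by
    refine ⟨fun hAB i hi => ?_, fun hAB => biSup_mono hAB⟩
    by_contra hiB
    exact hne i ((ht.disjoint_biSup hiB).eq_bot_of_le ((le_biSup t hi).trans hAB))

theorem stmt10 {R : Type u} [Ring R] {M : Type v} [AddCommGroup M] [Module R M]
    (h : HasKrullDim R M) : FinUniformDim R M := by
  obtain ⟨o, ho⟩ := h
  intro S hS hind
  by_contra hfin
  have : Infinite S := Set.infinite_coe_iff.mpr hfin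
  let e := ((sSupIndep_iff S).mp hind).biSupOrderEmbedding fun N => hS N N.2
  exact Set.not_devLE_univ_empty o (DevLE.of_orderEmbedding e (ho.mono le_top bot_le))
end

section
/- Every R-module with property AB5* is amply supplemented: whenever N + L = M for submodules N, L of M, there exists a supplement K of L in M with K ⊆ N. -/
universe u v

/-- Zorn's lemma for minimal elements. -/
lemma aux_zorn_min {α : Type*} [PartialOrder α] (s : Set α)
    (ih : ∀ c ⊆ s, IsChain (· ≤ ·) c → ∀ y ∈ c, ∃ lb ∈ s, ∀ z ∈ c, lb ≤ z)
    (x : α) (hxs : x ∈ s) : ∃ m, m ≤ x ∧ m ∈ s ∧ ∀ z ∈ s, z ≤ m → z = m := by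
  obtain ⟨m, hxm, hms, hmax⟩ :=
    zorn_le_nonempty₀ (α := αᵒᵈ) (OrderDual.ofDual ⁻¹' s)
      (fun c hcs hc y hy => by
        obtain ⟨lb, hlbs, hlb⟩ := ih (OrderDual.ofDual '' c)
          (by rintro _ ⟨a, ha, rfl⟩; exact hcs ha)
          (by
            rintro _ ⟨a, ha, rfl⟩ _ ⟨b, hb, rfl⟩ hab
            rcases hc ha hb (fun e => hab (congrArg OrderDual.ofDual e)) with h | h
            · exact Or.inr h
            · exact Or.inl h)
          (OrderDual.ofDual y) ⟨y, hy, rfl⟩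
        exact ⟨OrderDual.toDual lb, hlbs, fun z hz => hlb _ ⟨z, hz, rfl⟩⟩)
      (OrderDual.toDual x) hxs
  exact ⟨OrderDual.ofDual m, hxm, hms, fun z hzs hzm => le_antisymm hzm (hmax (y := OrderDual.toDual z) hzs hzm)⟩

theorem stmt13 {R : Type u} [Ring R] {M : Type v} [AddCommGroup M] [Module R M]
    (hAB5 : AB5Star R M) :
    ∀ N L : Submodule R M, N ⊔ L = ⊤ →
      ∃ K ≤ N, K ⊔ L = ⊤ ∧ IsSmall R (Submodule.comap K.subtype (K ⊓ L)) := by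
  intro N L hNL
  set S : Set (Submodule R M) := {K | K ≤ N ∧ K ⊔ L = ⊤} with hS
  obtain ⟨K, -, ⟨hKN, hKL⟩, hmin⟩ :=
    aux_zorn_min S
      (fun c hcS hc y hy => by
        refine ⟨sInf c, ⟨?_, ?_⟩, fun z hz => sInf_le hz⟩
        · exact le_trans (sInf_le hy) (hcS hy).1
        · have hdir : DirectedOn (· ≥ ·) c := by
            intro a ha b hb
            rcases hc.total ha hb with h | h
            · exact ⟨a, ha, le_refl _, h⟩
            · exact ⟨b, hb, h, le_refl _⟩
          have habs := hAB5 L c ⟨y, hy⟩ hdir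
          rw [sup_comm, habs]
          simp only [iInf_eq_top]
          intro m hm
          rw [sup_comm]
          exact (hcS hm).2)
      N ⟨le_refl N, hNL⟩
  refine ⟨K, hKN, hKL, ?_⟩
  intro X hX
  have hinj := Submodule.map_injective_of_injective (Submodule.injective_subtype K)
  have hmap : (K ⊓ L) ⊔ Submodule.map K.subtype X = K := by
    have h2 := congrArg (Submodule.map K.subtype) hX
    rwa [Submodule.map_sup, Submodule.map_comap_subtype, Submodule.map_top,
      Submodule.range_subtype, ← inf_assoc, inf_idem] at h2
  set X' := Submodule.map K.subtype X with hX'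
  have hX'K : X' ≤ K := Submodule.map_subtype_le K X
  have hX'L : X' ⊔ L = ⊤ := by
    refine le_antisymm le_top ?_
    rw [← hKL, ← hmap]
    exact sup_le (sup_le (le_trans inf_le_right le_sup_right) le_sup_left) le_sup_right
  have hX'eq : X' = K := hmin X' ⟨le_trans hX'K hKN, hX'L⟩ hX'K
  apply hinj
  rw [Submodule.map_top, Submodule.range_subtype, ← hX', hX'eq]
end

section
/- If N is a supplement of some submodule in an R-module M, then Rad(N) = N ∩ Rad(M). -/
universe u v

section Aux

variable {R : Type u} [Ring R] {M : Type v} [AddCommGroup M] [Module R M]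

lemma isSmall_of_le {S T : Submodule R M} (h : T ≤ S) (hS : IsSmall R S) : IsSmall R T := by
  intro K hK
  apply hS
  rw [eq_top_iff, ← hK]
  exact sup_le_sup_right h K

lemma isSmall_sup_s14 {S T : Submodule R M} (hS : IsSmall R S) (hT : IsSmall R T) :
    IsSmall R (S ⊔ T) := by
  intro K hK
  rw [sup_assoc] at hK
  exact hT K (hS _ hK)

lemma mem_rad_iff {x : M} : x ∈ Rad R M ↔ ∃ S : Submodule R M, IsSmall R S ∧ x ∈ S := by
  have hne : ({S : Submodule R M | IsSmall R S}).Nonempty := ⟨⊥, isSmall_bot⟩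
  have hdir : DirectedOn (· ≤ ·) {S : Submodule R M | IsSmall R S} := fun a ha b hb =>
    ⟨a ⊔ b, isSmall_sup_s14 ha hb, le_sup_left, le_sup_right⟩
  constructor
  · intro hx
    obtain ⟨p, hp, h⟩ := (Submodule.mem_sSup_of_directed hne hdir).mp hx
    exact ⟨p, hp, h⟩
  · rintro ⟨S, hS, hx⟩
    exact (Submodule.mem_sSup_of_directed hne hdir).mpr ⟨S, hS, hx⟩

lemma isSmall_map {N : Submodule R M} {S : Submodule R ↥N} (hS : IsSmall R S) :
    IsSmall R (S.map N.subtype) := by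
  intro K hK
  have hNK : Submodule.comap N.subtype K = ⊤ := by
    apply hS
    rw [eq_top_iff]
    rintro ⟨n, hn⟩ -
    have := hK ▸ Submodule.mem_top (x := n)
    rw [Submodule.mem_sup] at this
    obtain ⟨s, hs, k, hk, hsk⟩ := this
    obtain ⟨s', hs', rfl⟩ := hs
    rw [Submodule.mem_sup]
    refine ⟨s', hs', ⟨n, hn⟩ - s', ?_, by simp⟩
    have : ((⟨n, hn⟩ : ↥N) - s' : ↥N).1 = k := by
      simp [← hsk]
    simpa [Submodule.mem_comap, this] using hk
  rw [Submodule.comap_subtype_eq_top] at hNK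
  rw [eq_top_iff, ← hK]
  exact sup_le ((Submodule.map_subtype_le N S).trans hNK) le_rfl

lemma isSmall_comap {N L : Submodule R M} (hNL : N ⊔ L = ⊤)
    (hsm : IsSmall R (Submodule.comap N.subtype (N ⊓ L)))
    {P : Submodule R M} (hPN : P ≤ N) (hP : IsSmall R P) :
    IsSmall R (Submodule.comap N.subtype P) := by
  intro K' hK'
  set K := K'.map N.subtype with hKdef
  have hKN : K ≤ N := Submodule.map_subtype_le N K'
  have hPK : P ⊔ K = N := by
    have := congrArg (Submodule.map N.subtype) hK'
    rw [Submodule.map_sup, Submodule.map_comap_subtype, inf_eq_right.2 hPN] at this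
    simpa [Submodule.range_subtype] using this
  have hKL : K ⊔ L = ⊤ := by
    apply hP
    rw [← sup_assoc, hPK, hNL]
  have hmod : K ⊔ (L ⊓ N) = N := by
    rw [← sup_inf_assoc_of_le L hKN, hKL, top_inf_eq]
  -- now show comap (N ⊓ L) ⊔ K' = ⊤ in ↥N
  have : Submodule.comap N.subtype (N ⊓ L) ⊔ K' = ⊤ := by
    rw [eq_top_iff]
    rintro ⟨n, hn⟩ -
    have hnmem : n ∈ K ⊔ (L ⊓ N) := by rw [hmod]; exact hn
    rw [Submodule.mem_sup] at hnmem
    obtain ⟨k, hk, w, hw, hkw⟩ := hnmem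
    obtain ⟨k', hk', rfl⟩ := hk
    rw [Submodule.mem_sup]
    refine ⟨⟨n, hn⟩ - k', ?_, k', hk', by simp⟩
    have hval : ((⟨n, hn⟩ : ↥N) - k' : ↥N).1 = w := by simp [← hkw]
    simp only [Submodule.mem_comap, Submodule.subtype_apply, hval]
    exact ⟨hw.2, hw.1⟩
  exact hsm K' this

end Aux

theorem stmt14 {R : Type u} [Ring R] {M : Type v} [AddCommGroup M] [Module R M]
    (N : Submodule R M)
    (h : ∃ L : Submodule R M, N ⊔ L = ⊤ ∧ IsSmall R (Submodule.comap N.subtype (N ⊓ L))) :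
    (Rad R N).map N.subtype = N ⊓ Rad R M := by
  obtain ⟨L, hNL, hsm⟩ := h
  apply le_antisymm
  · refine le_inf (Submodule.map_subtype_le N _) ?_
    rw [Submodule.map_le_iff_le_comap, Rad]
    apply sSup_le
    intro S hS
    rw [← Submodule.map_le_iff_le_comap]
    show Submodule.map N.subtype S ≤ Rad R M
    rw [Rad]
    exact le_sSup (isSmall_map hS)
  · rintro x ⟨hxN, hxR⟩
    obtain ⟨S, hS, hxS⟩ := mem_rad_iff.mp hxR
    have hsmall : IsSmall R (Submodule.comap N.subtype (S ⊓ N)) :=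
      isSmall_comap hNL hsm inf_le_right (isSmall_of_le inf_le_left hS)
    refine ⟨⟨x, hxN⟩, ?_, rfl⟩
    have hle : Submodule.comap N.subtype (S ⊓ N) ≤ Rad R ↥N := le_sSup hsmall
    exact hle (Submodule.mem_comap.mpr ⟨hxS, hxN⟩)
end
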